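/- arXiv:2112.12708 — 2 statements merged into one kernel-verified Lean document; each statement's English description precedes it below -/
import Mathlib

section
/- Let A be a special Frobenius algebra in a monoidal category (i.e., a Frobenius algebra with μ ∘ Δ = id_A), let M be a right A-module with action ρ̄ : M ⊗ A → M, and let N be a left A-module with action ρ : A ⊗ N → N. Then the morphism P := (ρ̄ ⊗ ρ) ∘ (id_M ⊗ (Δ ∘ η) ⊗ id_N) : M ⊗ N → M ⊗ N is an idempotent, P ∘ P = P. -/
/-!
Write `e = Δ ∘ η : 𝟙 ⟶ A ⊗ A` and, for any global element `x` of `A ⊗ A`, let `P_x` act on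
`M ⊗ N` by `m ⊗ n ↦ m x₁ ⊗ x₂ n`, so that `P = P_e`. The module axioms give
`P_x ∘ P_y = P_{x ⋆ y}` for the multiplication `⋆` of `A ⊗ Aᵒᵖ`, so it suffices that `e` is
idempotent in `A ⊗ Aᵒᵖ`. The Frobenius relations give `Δ(a) = a e₁ ⊗ e₂` and
`Δ(a) (1 ⊗ b) = Δ(a b)`, hence `e ⋆ e = Δ(e₁) (1 ⊗ e₂) = Δ(μ (Δ η)) = Δ η = e` by speciality.
-/

open CategoryTheory MonoidalCategory

section

variable {C : Type*} [Category C] [MonoidalCategory C]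

theorem tensorHom_comp_whiskerLeft_insert {X X' Y Y' Z : C} (f : X ⟶ X') (g : Y ⟶ Y')
    (z : 𝟙_ C ⟶ Z) :
    (f ⊗ₘ g) ≫ X' ◁ ((λ_ Y').inv ≫ z ▷ Y') =
      X ◁ ((λ_ Y).inv ≫ z ▷ Y) ≫ (f ⊗ₘ (Z ◁ g)) := by
  rw [MonoidalCategory.tensorHom_def, MonoidalCategory.tensorHom_def, whisker_exchange_assoc,
    Category.assoc, ← whiskerLeft_comp, ← whiskerLeft_comp, leftUnitor_inv_naturality_assoc,
    whisker_exchange, Category.assoc]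

variable {A M N : C}

/-- The product `x ⋆ y = x₁ y₁ ⊗ y₂ x₂` of `A ⊗ Aᵒᵖ` on global elements; without a braiding,
`y` is nested between the two legs of `x`. -/
def envMul (μ : A ⊗ A ⟶ A) (x y : 𝟙_ C ⟶ A ⊗ A) : 𝟙_ C ⟶ A ⊗ A :=
  x ≫ A ◁ ((λ_ A).inv ≫ y ▷ A ≫ (α_ A A A).hom) ≫ (α_ A A (A ⊗ A)).inv ≫ (μ ⊗ₘ μ)

def sandwich (ρM : M ⊗ A ⟶ M) (ρN : A ⊗ N ⟶ N) (x : 𝟙_ C ⟶ A ⊗ A) : M ⊗ N ⟶ M ⊗ N :=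
  M ◁ ((λ_ N).inv ≫ x ▷ N ≫ (α_ A A N).hom) ≫ (α_ M A (A ⊗ N)).inv ≫ (ρM ⊗ₘ ρN)

theorem sandwich_comp_sandwich (μ : A ⊗ A ⟶ A) (ρM : M ⊗ A ⟶ M) (ρN : A ⊗ N ⟶ N)
    (ρM_assoc : (α_ M A A).hom ≫ M ◁ μ ≫ ρM = ρM ▷ A ≫ ρM)
    (ρN_assoc : (α_ A A N).hom ≫ A ◁ ρN ≫ ρN = μ ▷ N ≫ ρN) (x y : 𝟙_ C ⟶ A ⊗ A) :
    sandwich ρM ρN x ≫ sandwich ρM ρN y = sandwich ρM ρN (envMul μ x y) := by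
  calc sandwich ρM ρN x ≫ sandwich ρM ρN y
      = M ◁ ((λ_ N).inv ≫ x ▷ N ≫ (α_ A A N).hom) ≫ (α_ M A (A ⊗ N)).inv ≫
          ((ρM ⊗ₘ ρN) ≫ M ◁ ((λ_ N).inv ≫ y ▷ N)) ≫ M ◁ (α_ A A N).hom ≫
          (α_ M A (A ⊗ N)).inv ≫ (ρM ⊗ₘ ρN) := by
        simp only [sandwich, whiskerLeft_comp, Category.assoc]
    _ = M ◁ ((λ_ N).inv ≫ x ▷ N ≫ (α_ A A N).hom) ≫ (α_ M A (A ⊗ N)).inv ≫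
          ((M ⊗ A) ◁ ((λ_ (A ⊗ N)).inv ≫ y ▷ (A ⊗ N)) ≫ (ρM ⊗ₘ (A ⊗ A) ◁ ρN)) ≫
          M ◁ (α_ A A N).hom ≫ (α_ M A (A ⊗ N)).inv ≫ (ρM ⊗ₘ ρN) := by
        rw [tensorHom_comp_whiskerLeft_insert]
    _ = M ◁ ((λ_ N).inv ≫ x ▷ N ≫ (α_ A A N).hom) ⊗≫
          (M ⊗ A) ◁ ((λ_ (A ⊗ N)).inv ≫ y ▷ (A ⊗ N)) ⊗≫
          ((ρM ▷ A ≫ ρM) ⊗ₘ (A ◁ ρN ≫ ρN)) := by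
        rw [← tensorHom_comp_tensorHom]
        simp only [MonoidalCategory.tensorHom_def]
        monoidal
    _ = M ◁ ((λ_ N).inv ≫ x ▷ N ≫ (α_ A A N).hom) ⊗≫
          (M ⊗ A) ◁ ((λ_ (A ⊗ N)).inv ≫ y ▷ (A ⊗ N)) ⊗≫
          (((α_ M A A).hom ≫ M ◁ μ) ⊗ₘ ((α_ A A N).inv ≫ μ ▷ N)) ≫ (ρM ⊗ₘ ρN) := by
        rw [tensorHom_comp_tensorHom, Category.assoc, Category.assoc, ρM_assoc, ← ρN_assoc,
          Iso.inv_hom_id_assoc]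
    _ = sandwich ρM ρN (envMul μ x y) := by
        simp only [sandwich, envMul, MonoidalCategory.tensorHom_def]
        monoidal

theorem rightUnitor_inv_whiskerLeft_unit_comul_mul_eq_comul (μ : A ⊗ A ⟶ A) (η : 𝟙_ C ⟶ A)
    (Δ : A ⟶ A ⊗ A) (unit_right : A ◁ η ≫ μ = (ρ_ A).hom)
    (frob₁ : A ◁ Δ ≫ (α_ A A A).inv ≫ μ ▷ A = μ ≫ Δ) :
    (ρ_ A).inv ≫ A ◁ (η ≫ Δ) ≫ (α_ A A A).inv ≫ μ ▷ A = Δ := by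
  rw [whiskerLeft_comp, Category.assoc, frob₁, reassoc_of% unit_right, Iso.inv_hom_id_assoc]

theorem envMul_unit_comul_self (μ : A ⊗ A ⟶ A) (η : 𝟙_ C ⟶ A) (Δ : A ⟶ A ⊗ A)
    (unit_right : A ◁ η ≫ μ = (ρ_ A).hom)
    (frob₁ : A ◁ Δ ≫ (α_ A A A).inv ≫ μ ▷ A = μ ≫ Δ)
    (frob₂ : Δ ▷ A ≫ (α_ A A A).hom ≫ A ◁ μ = μ ≫ Δ) (special : Δ ≫ μ = 𝟙 A) :
    envMul μ (η ≫ Δ) (η ≫ Δ) = η ≫ Δ := by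
  calc envMul μ (η ≫ Δ) (η ≫ Δ)
      = η ≫ Δ ≫ ((ρ_ A).inv ≫ A ◁ (η ≫ Δ) ≫ (α_ A A A).inv ≫ μ ▷ A) ▷ A ≫
          (α_ A A A).hom ≫ A ◁ μ := by
        simp only [envMul, MonoidalCategory.tensorHom_def]
        monoidal
    _ = η ≫ Δ := by
        rw [rightUnitor_inv_whiskerLeft_unit_comul_mul_eq_comul μ η Δ unit_right frob₁, frob₂,
          reassoc_of% special]

end

theorem tensor_over_special_frobenius_idempotent_general
    {C : Type*} [Category C] [MonoidalCategory C] {A M N : C}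
    (μ : A ⊗ A ⟶ A) (η : 𝟙_ C ⟶ A) (Δ : A ⟶ A ⊗ A)
    (unit_right : (𝟙 A ⊗ₘ η) ≫ μ = (ρ_ A).hom)
    (frob₁ : (𝟙 A ⊗ₘ Δ) ≫ (α_ A A A).inv ≫ (μ ⊗ₘ 𝟙 A) = μ ≫ Δ)
    (frob₂ : (Δ ⊗ₘ 𝟙 A) ≫ (α_ A A A).hom ≫ (𝟙 A ⊗ₘ μ) = μ ≫ Δ)
    (special : Δ ≫ μ = 𝟙 A)
    (ρM : M ⊗ A ⟶ M)
    (ρM_assoc : (α_ M A A).hom ≫ (𝟙 M ⊗ₘ μ) ≫ ρM = (ρM ⊗ₘ 𝟙 A) ≫ ρM)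
    (ρN : A ⊗ N ⟶ N)
    (ρN_assoc : (α_ A A N).hom ≫ (𝟙 A ⊗ₘ ρN) ≫ ρN = (μ ⊗ₘ 𝟙 N) ≫ ρN)
    (P : M ⊗ N ⟶ M ⊗ N)
    (hP : P = (𝟙 M ⊗ₘ (λ_ N).inv) ≫ (𝟙 M ⊗ₘ ((η ≫ Δ) ⊗ₘ 𝟙 N)) ≫
        (𝟙 M ⊗ₘ (α_ A A N).hom) ≫ (α_ M A (A ⊗ N)).inv ≫ (ρM ⊗ₘ ρN)) :
    P ≫ P = P := by
  simp only [id_tensorHom, tensorHom_id] at unit_right frob₁ frob₂ ρM_assoc ρN_assoc hP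
  have hP_eq : P = sandwich ρM ρN (η ≫ Δ) := by
    simp only [hP, sandwich, whiskerLeft_comp, Category.assoc]
  rw [hP_eq, sandwich_comp_sandwich μ ρM ρN ρM_assoc ρN_assoc,
    envMul_unit_comul_self μ η Δ unit_right frob₁ frob₂ special]

/-- For a special Frobenius algebra `A` in a monoidal category, a right `A`-module
`(M, ρ̄)` and a left `A`-module `(N, ρ)`, the morphism
`P = (ρ̄ ⊗ ρ) ∘ (id_M ⊗ (Δ ∘ η) ⊗ id_N) : M ⊗ N ⟶ M ⊗ N` is an idempotent. -/
theorem tensor_over_special_frobenius_idempotent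
    {C : Type*} [Category C] [MonoidalCategory C] {A M N : C}
    (μ : A ⊗ A ⟶ A) (η : 𝟙_ C ⟶ A) (Δ : A ⟶ A ⊗ A) (ε : A ⟶ 𝟙_ C)
    (assoc : (α_ A A A).hom ≫ (𝟙 A ⊗ₘ μ) ≫ μ = (μ ⊗ₘ 𝟙 A) ≫ μ)
    (unit_left : (η ⊗ₘ 𝟙 A) ≫ μ = (λ_ A).hom)
    (unit_right : (𝟙 A ⊗ₘ η) ≫ μ = (ρ_ A).hom)
    (coassoc : Δ ≫ (𝟙 A ⊗ₘ Δ) = Δ ≫ (Δ ⊗ₘ 𝟙 A) ≫ (α_ A A A).hom)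
    (counit_left : Δ ≫ (ε ⊗ₘ 𝟙 A) = (λ_ A).inv)
    (counit_right : Δ ≫ (𝟙 A ⊗ₘ ε) = (ρ_ A).inv)
    (frob₁ : (𝟙 A ⊗ₘ Δ) ≫ (α_ A A A).inv ≫ (μ ⊗ₘ 𝟙 A) = μ ≫ Δ)
    (frob₂ : (Δ ⊗ₘ 𝟙 A) ≫ (α_ A A A).hom ≫ (𝟙 A ⊗ₘ μ) = μ ≫ Δ)
    (special : Δ ≫ μ = 𝟙 A)
    (ρM : M ⊗ A ⟶ M)
    (ρM_assoc : (α_ M A A).hom ≫ (𝟙 M ⊗ₘ μ) ≫ ρM = (ρM ⊗ₘ 𝟙 A) ≫ ρM)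
    (ρM_unit : (𝟙 M ⊗ₘ η) ≫ ρM = (ρ_ M).hom)
    (ρN : A ⊗ N ⟶ N)
    (ρN_assoc : (α_ A A N).hom ≫ (𝟙 A ⊗ₘ ρN) ≫ ρN = (μ ⊗ₘ 𝟙 N) ≫ ρN)
    (ρN_unit : (η ⊗ₘ 𝟙 N) ≫ ρN = (λ_ N).hom)
    (P : M ⊗ N ⟶ M ⊗ N)
    (hP : P = (𝟙 M ⊗ₘ (λ_ N).inv) ≫ (𝟙 M ⊗ₘ ((η ≫ Δ) ⊗ₘ 𝟙 N)) ≫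
        (𝟙 M ⊗ₘ (α_ A A N).hom) ≫ (α_ M A (A ⊗ N)).inv ≫ (ρM ⊗ₘ ρN)) :
    P ≫ P = P :=
  tensor_over_special_frobenius_idempotent_general μ η Δ unit_right frob₁ frob₂ special ρM ρM_assoc
    ρN ρN_assoc P hP
end

section
/- Let C be a monoidal category, A an algebra in C, (M, ρ̄) a right A-module and (N, ρ) a left A-module. If A is special Frobenius, then the idempotent P = (ρ̄ ⊗ ρ) ∘ (id_M ⊗ (Δ ∘ η) ⊗ id_N) on M ⊗ N coequalizes the two action morphisms: P ∘ (ρ̄ ⊗ id_N) = P ∘ (id_M ⊗ ρ) as morphisms M ⊗ A ⊗ N → M ⊗ N. -/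
open CategoryTheory MonoidalCategory

/-! The Frobenius relations and the unit laws give `Δ a = (a ⊗ 1) Δ 1 = Δ 1 (1 ⊗ a)`.
Writing `Δ 1 = ∑ x ⊗ y`, acting by `a` on `M` before `P` gives `∑ (m a) x ⊗ y n = ∑ m a₁ ⊗ a₂ n`
by associativity of `ρ̄`, and acting on `N` gives `∑ m x ⊗ y (a n) = ∑ m a₁ ⊗ a₂ n` by
associativity of `ρ`; so both composites equal `m ⊗ a ⊗ n ↦ ∑ m a₁ ⊗ a₂ n`. -/

namespace FrobeniusAlgebra

variable {C : Type*} [Category C] [MonoidalCategory C] {A : C}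
  (μ : A ⊗ A ⟶ A) (η : 𝟙_ C ⟶ A) (Δ : A ⟶ A ⊗ A)

theorem comul_eq_mul_comul_one (frob : A ◁ Δ ≫ (α_ A A A).inv ≫ μ ▷ A = μ ≫ Δ)
    (unit_right : A ◁ η ≫ μ = (ρ_ A).hom) :
    (ρ_ A).inv ≫ A ◁ (η ≫ Δ) ≫ (α_ A A A).inv ≫ μ ▷ A = Δ := by
  rw [whiskerLeft_comp_assoc, frob, reassoc_of% unit_right, Iso.inv_hom_id_assoc]

theorem comul_eq_comul_one_mul (frob : Δ ▷ A ≫ (α_ A A A).hom ≫ A ◁ μ = μ ≫ Δ)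
    (unit_left : η ▷ A ≫ μ = (λ_ A).hom) :
    (λ_ A).inv ≫ (η ≫ Δ) ▷ A ≫ (α_ A A A).hom ≫ A ◁ μ = Δ := by
  rw [comp_whiskerRight_assoc, frob, reassoc_of% unit_left, Iso.inv_hom_id_assoc]

variable {M N : C} (ρM : M ⊗ A ⟶ M) (ρN : A ⊗ N ⟶ N)

def unitComulAction : M ⊗ N ⟶ M ⊗ N :=
  M ◁ ((λ_ N).inv ≫ (η ≫ Δ) ▷ N ≫ (α_ A A N).hom) ≫ (α_ M A (A ⊗ N)).inv ≫ (ρM ⊗ₘ ρN)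

def comulAction : (M ⊗ A) ⊗ N ⟶ M ⊗ N :=
  (α_ M A N).hom ≫ M ◁ (Δ ▷ N ≫ (α_ A A N).hom) ≫ (α_ M A (A ⊗ N)).inv ≫ (ρM ⊗ₘ ρN)

theorem whiskerRight_comp_unitComulAction
    (frob : A ◁ Δ ≫ (α_ A A A).inv ≫ μ ▷ A = μ ≫ Δ) (unit_right : A ◁ η ≫ μ = (ρ_ A).hom)
    (ρM_assoc : (α_ M A A).hom ≫ M ◁ μ ≫ ρM = ρM ▷ A ≫ ρM) :
    ρM ▷ N ≫ unitComulAction η Δ ρM ρN = comulAction Δ ρM ρN := by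
  conv_rhs => rw [← comul_eq_mul_comul_one μ η Δ frob unit_right]
  simp only [unitComulAction, comulAction, MonoidalCategory.tensorHom_def]
  rw [← whisker_exchange_assoc, associator_inv_naturality_left_assoc,
    ← comp_whiskerRight_assoc, ← ρM_assoc]
  simp only [comp_whiskerRight, whiskerLeft_comp, Category.assoc]
  monoidal

theorem act_unit_comul_act_eq_comul_act
    (frob : Δ ▷ A ≫ (α_ A A A).hom ≫ A ◁ μ = μ ≫ Δ) (unit_left : η ▷ A ≫ μ = (λ_ A).hom)
    (ρN_assoc : (α_ A A N).hom ≫ A ◁ ρN ≫ ρN = μ ▷ N ≫ ρN) :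
    ρN ≫ (λ_ N).inv ≫ (η ≫ Δ) ▷ N ≫ (α_ A A N).hom ≫ A ◁ ρN =
      Δ ▷ N ≫ (α_ A A N).hom ≫ A ◁ ρN := by
  conv_rhs => rw [← comul_eq_comul_one_mul μ η Δ frob unit_left]
  rw [leftUnitor_inv_naturality_assoc, whisker_exchange_assoc,
    associator_naturality_right_assoc, ← whiskerLeft_comp,
    (Iso.eq_inv_comp _).mpr ρN_assoc]
  monoidal

theorem whiskerLeft_comp_unitComulAction
    (frob : Δ ▷ A ≫ (α_ A A A).hom ≫ A ◁ μ = μ ≫ Δ) (unit_left : η ▷ A ≫ μ = (λ_ A).hom)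
    (ρN_assoc : (α_ A A N).hom ≫ A ◁ ρN ≫ ρN = μ ▷ N ≫ ρN) :
    (α_ M A N).hom ≫ M ◁ ρN ≫ unitComulAction η Δ ρM ρN = comulAction Δ ρM ρN := by
  simp only [unitComulAction, comulAction, MonoidalCategory.tensorHom_def, ← whisker_exchange,
    ← associator_inv_naturality_right_assoc, ← whiskerLeft_comp_assoc, Category.assoc]
  rw [act_unit_comul_act_eq_comul_act μ η Δ ρN frob unit_left ρN_assoc]

end FrobeniusAlgebra

theorem special_frobenius_idempotent_coequalizes_general
    {C : Type*} [Category C] [MonoidalCategory C] {A M N : C}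
    (μ : A ⊗ A ⟶ A) (η : 𝟙_ C ⟶ A) (Δ : A ⟶ A ⊗ A)
    (unit_left : (η ⊗ₘ 𝟙 A) ≫ μ = (λ_ A).hom)
    (unit_right : (𝟙 A ⊗ₘ η) ≫ μ = (ρ_ A).hom)
    (frob₁ : (𝟙 A ⊗ₘ Δ) ≫ (α_ A A A).inv ≫ (μ ⊗ₘ 𝟙 A) = μ ≫ Δ)
    (frob₂ : (Δ ⊗ₘ 𝟙 A) ≫ (α_ A A A).hom ≫ (𝟙 A ⊗ₘ μ) = μ ≫ Δ)
    (ρM : M ⊗ A ⟶ M)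
    (ρM_assoc : (α_ M A A).hom ≫ (𝟙 M ⊗ₘ μ) ≫ ρM = (ρM ⊗ₘ 𝟙 A) ≫ ρM)
    (ρN : A ⊗ N ⟶ N)
    (ρN_assoc : (α_ A A N).hom ≫ (𝟙 A ⊗ₘ ρN) ≫ ρN = (μ ⊗ₘ 𝟙 N) ≫ ρN)
    (P : M ⊗ N ⟶ M ⊗ N)
    (hP : P = (𝟙 M ⊗ₘ (λ_ N).inv) ≫ (𝟙 M ⊗ₘ ((η ≫ Δ) ⊗ₘ 𝟙 N)) ≫
        (𝟙 M ⊗ₘ (α_ A A N).hom) ≫ (α_ M A (A ⊗ N)).inv ≫ (ρM ⊗ₘ ρN)) :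
    (ρM ⊗ₘ 𝟙 N) ≫ P = (α_ M A N).hom ≫ (𝟙 M ⊗ₘ ρN) ≫ P := by
  simp only [id_tensorHom, tensorHom_id] at frob₁ frob₂ unit_left unit_right ρM_assoc ρN_assoc
  subst hP
  have right := FrobeniusAlgebra.whiskerRight_comp_unitComulAction μ η Δ ρM ρN
    frob₁ unit_right ρM_assoc
  have left := FrobeniusAlgebra.whiskerLeft_comp_unitComulAction μ η Δ ρM ρN
    frob₂ unit_left ρN_assoc
  simpa only [FrobeniusAlgebra.unitComulAction, id_tensorHom, tensorHom_id, whiskerLeft_comp,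
    Category.assoc] using right.trans left.symm

/-- For a special Frobenius algebra `A`, a right `A`-module `(M, ρ̄)` and a left
`A`-module `(N, ρ)`, the idempotent `P = (ρ̄ ⊗ ρ) ∘ (id_M ⊗ (Δ ∘ η) ⊗ id_N)` on
`M ⊗ N` coequalizes the two action morphisms:
`P ∘ (ρ̄ ⊗ id_N) = P ∘ (id_M ⊗ ρ)` as morphisms `M ⊗ A ⊗ N ⟶ M ⊗ N`. -/
theorem special_frobenius_idempotent_coequalizes
    {C : Type*} [Category C] [MonoidalCategory C] {A M N : C}
    (μ : A ⊗ A ⟶ A) (η : 𝟙_ C ⟶ A) (Δ : A ⟶ A ⊗ A) (ε : A ⟶ 𝟙_ C)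
    (assoc : (α_ A A A).hom ≫ (𝟙 A ⊗ₘ μ) ≫ μ = (μ ⊗ₘ 𝟙 A) ≫ μ)
    (unit_left : (η ⊗ₘ 𝟙 A) ≫ μ = (λ_ A).hom)
    (unit_right : (𝟙 A ⊗ₘ η) ≫ μ = (ρ_ A).hom)
    (coassoc : Δ ≫ (𝟙 A ⊗ₘ Δ) = Δ ≫ (Δ ⊗ₘ 𝟙 A) ≫ (α_ A A A).hom)
    (counit_left : Δ ≫ (ε ⊗ₘ 𝟙 A) = (λ_ A).inv)
    (counit_right : Δ ≫ (𝟙 A ⊗ₘ ε) = (ρ_ A).inv)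
    (frob₁ : (𝟙 A ⊗ₘ Δ) ≫ (α_ A A A).inv ≫ (μ ⊗ₘ 𝟙 A) = μ ≫ Δ)
    (frob₂ : (Δ ⊗ₘ 𝟙 A) ≫ (α_ A A A).hom ≫ (𝟙 A ⊗ₘ μ) = μ ≫ Δ)
    (special : Δ ≫ μ = 𝟙 A)
    (ρM : M ⊗ A ⟶ M)
    (ρM_assoc : (α_ M A A).hom ≫ (𝟙 M ⊗ₘ μ) ≫ ρM = (ρM ⊗ₘ 𝟙 A) ≫ ρM)
    (ρM_unit : (𝟙 M ⊗ₘ η) ≫ ρM = (ρ_ M).hom)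
    (ρN : A ⊗ N ⟶ N)
    (ρN_assoc : (α_ A A N).hom ≫ (𝟙 A ⊗ₘ ρN) ≫ ρN = (μ ⊗ₘ 𝟙 N) ≫ ρN)
    (ρN_unit : (η ⊗ₘ 𝟙 N) ≫ ρN = (λ_ N).hom)
    (P : M ⊗ N ⟶ M ⊗ N)
    (hP : P = (𝟙 M ⊗ₘ (λ_ N).inv) ≫ (𝟙 M ⊗ₘ ((η ≫ Δ) ⊗ₘ 𝟙 N)) ≫
        (𝟙 M ⊗ₘ (α_ A A N).hom) ≫ (α_ M A (A ⊗ N)).inv ≫ (ρM ⊗ₘ ρN)) :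
    (ρM ⊗ₘ 𝟙 N) ≫ P = (α_ M A N).hom ≫ (𝟙 M ⊗ₘ ρN) ≫ P :=
  special_frobenius_idempotent_coequalizes_general μ η Δ unit_left unit_right frob₁ frob₂ ρM
    ρM_assoc ρN ρN_assoc P hP
end
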